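/- The Shapley value is the unique allocation rule satisfying the four axioms: if ψ assigns to every cooperative game v : 2^N → ℝ with v(∅) = 0 a payoff vector (ψ_i(v))_{i ∈ N} such that (Efficiency) Σ_{i ∈ N} ψ_i(v) = v(N) for every game v; (Symmetry) ψ_i(v) = ψ_j(v) whenever v(S ∪ {i}) = v(S ∪ {j}) for all S ⊆ N \ {i, j}; (Dummy) ψ_i(v) = 0 whenever v(S ∪ {i}) = v(S) for all S ⊆ N \ {i}; and (Additivity) ψ_i(v + w) = ψ_i(v) + ψ_i(w) for all games v, w and all i; then ψ_i(v) = φ_i(v) for every game v and every player i ∈ N. -/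

import Mathlib

/-!
Every game `v` with `v ∅ = 0` is a combination `∑_{T ≠ ∅} d_T • u_T` of unanimity games
`u_T S = [T ⊆ S]`, the Harsanyi dividends `d_T` being the Möbius inversion of `v` on the lattice
of coalitions. On `c • u_T` the axioms pin the payoff down: players outside `T` are dummies, the
players of `T` are symmetric, and efficiency splits `c` equally among them. By additivity a rule
satisfying the axioms is therefore unique. The Shapley value satisfies them; for efficiency, the
coefficient of `v T` in `∑ i, φ_i v` is `(|T| / C(n-1, |T|-1) - (n-|T|) / C(n-1, |T|)) / n`,
which vanishes unless `T = ∅` or `T = univ`.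
-/

open Finset IncidenceAlgebra

noncomputable def shapley {α : Type*} [Fintype α] [DecidableEq α]
    (v : Finset α → ℝ) (i : α) : ℝ :=
  ((Fintype.card α : ℝ))⁻¹ *
    ∑ S ∈ (Finset.univ \ {i} : Finset α).powerset,
      ((Nat.choose (Fintype.card α - 1) S.card : ℝ))⁻¹ * (v (insert i S) - v S)

theorem sum_Iic_sum_Iic_mu_mul {𝕜 α : Type*} [Ring 𝕜] [PartialOrder α] [LocallyFiniteOrder α]
    [OrderBot α] [DecidableEq α] (g : α → 𝕜) (x : α) :
    ∑ y ∈ Iic x, ∑ z ∈ Iic y, mu 𝕜 z y * g z = g x := by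
  rw [sum_comm' (t' := Iic x) (s' := fun z => Icc z x) fun y z => by
    simp only [mem_Iic, mem_Icc]
    exact ⟨fun ⟨hy, hz⟩ => ⟨⟨hz, hy⟩, hz.trans hy⟩, fun ⟨⟨hz, hy⟩, _⟩ => ⟨hy, hz⟩⟩]
  simp_rw [← sum_mul, sum_Icc_mu_right, ite_mul, one_mul, zero_mul]
  simp

theorem Nat.mul_inv_choose_pred_sub_mul_inv_choose (n k : ℕ) (hk : k ≤ n) :
    (k : ℝ) * ((n - 1).choose (k - 1) : ℝ)⁻¹ - ((n - k : ℕ) : ℝ) * ((n - 1).choose k : ℝ)⁻¹ =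
      n * ((if k = n then 1 else 0) - if k = 0 then 1 else 0) := by
  obtain rfl | hk0 := k.eq_zero_or_pos
  · obtain rfl | hn := eq_or_ne n 0 <;> simp [*, eq_comm]
  obtain rfl | hkn := hk.eq_or_lt
  · simp [hk0.ne']
  obtain ⟨m, rfl⟩ : ∃ m, n = m + 1 := ⟨n - 1, by omega⟩
  obtain ⟨j, rfl⟩ : ∃ j, k = j + 1 := ⟨k - 1, by omega⟩
  have hj : j + 1 ≤ m := by omega
  have hpos : (0 : ℝ) < m.choose j := by exact_mod_cast Nat.choose_pos (by omega)
  have hpos' : (0 : ℝ) < m.choose (j + 1) := by exact_mod_cast Nat.choose_pos hj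
  have hrec : (m.choose (j + 1) : ℝ) * (j + 1) = m.choose j * ((m - j : ℕ) : ℝ) := by
    exact_mod_cast Nat.choose_succ_right_eq m j
  simp only [Nat.add_sub_cancel, Nat.add_sub_add_right, Nat.add_eq_zero_iff,
    one_ne_zero, and_false, if_false, hkn.ne, sub_zero, mul_zero]
  field_simp
  push_cast at hrec ⊢
  linarith

theorem Finset.map_swap_eq_self {α : Type*} [DecidableEq α] {i j : α} {S : Finset α}
    (h : i ∈ S ↔ j ∈ S) : S.map (Equiv.swap i j).toEmbedding = S := by
  ext x
  rw [mem_map_equiv, Equiv.symm_swap, Equiv.swap_apply_def]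
  split_ifs <;> subst_vars <;> tauto

section Games

variable {α : Type*} [DecidableEq α]

def unanimityGame (T : Finset α) : Finset α → ℝ := fun S => if T ⊆ S then 1 else 0

theorem unanimityGame_empty {T : Finset α} (hT : T.Nonempty) : unanimityGame T ∅ = 0 :=
  if_neg fun h => hT.ne_empty (subset_empty.1 h)

def harsanyiDividend (v : Finset α → ℝ) (T : Finset α) : ℝ :=
  ∑ R ∈ Iic T, mu ℝ R T * v R

theorem harsanyiDividend_empty (v : Finset α → ℝ) : harsanyiDividend v ∅ = v ∅ := by
  simp [harsanyiDividend, Iic_eq_powerset]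

theorem sum_harsanyiDividend_smul_unanimityGame [Fintype α] (v : Finset α → ℝ) (hv : v ∅ = 0) :
    ∑ T ∈ univ.erase ∅, harsanyiDividend v T • unanimityGame T = v := by
  rw [sum_erase _ (by rw [harsanyiDividend_empty, hv, zero_smul])]
  funext S
  simp only [Finset.sum_apply, Pi.smul_apply, smul_eq_mul, unanimityGame, mul_ite, mul_one,
    mul_zero]
  rw [← sum_filter, ← sum_Iic_sum_Iic_mu_mul v S, filter_ge_eq_Iic]
  rfl

end Games

structure ShapleyAxioms {α : Type*} [Fintype α] [DecidableEq α]
    (ψ : (Finset α → ℝ) → α → ℝ) : Prop where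
  efficient : ∀ v : Finset α → ℝ, v ∅ = 0 → ∑ i : α, ψ v i = v Finset.univ
  symmetric : ∀ v : Finset α → ℝ, v ∅ = 0 → ∀ i j : α,
    (∀ S ⊆ (Finset.univ \ ({i, j} : Finset α)),
      v (insert i S) = v (insert j S)) → ψ v i = ψ v j
  dummy : ∀ v : Finset α → ℝ, v ∅ = 0 → ∀ i : α,
    (∀ S ⊆ (Finset.univ \ ({i} : Finset α)), v (insert i S) = v S) → ψ v i = 0
  additive : ∀ v w : Finset α → ℝ, v ∅ = 0 → w ∅ = 0 → ∀ i : α,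
    ψ (fun S => v S + w S) i = ψ v i + ψ w i

namespace ShapleyAxioms

variable {α : Type*} [Fintype α] [DecidableEq α] {ψ ψ' : (Finset α → ℝ) → α → ℝ}

theorem apply_zero (h : ShapleyAxioms ψ) (i : α) : ψ 0 i = 0 :=
  h.dummy 0 rfl i fun _ _ => rfl

theorem apply_sum (h : ShapleyAxioms ψ) {ι : Type*} (F : Finset ι) (g : ι → Finset α → ℝ)
    (hg : ∀ t ∈ F, g t ∅ = 0) (i : α) : ψ (∑ t ∈ F, g t) i = ∑ t ∈ F, ψ (g t) i := by
  classical
  induction F using Finset.induction_on with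
  | empty => simpa using h.apply_zero i
  | insert a F ha ih =>
    have hF : ∀ t ∈ F, g t ∅ = 0 := fun t ht => hg t (mem_insert_of_mem ht)
    rw [sum_insert ha, sum_insert ha, ← ih hF]
    have hF0 : (∑ t ∈ F, g t) ∅ = 0 := by simp [Finset.sum_apply, sum_eq_zero hF]
    exact h.additive _ _ (hg a (mem_insert_self a F)) hF0 i

theorem apply_smul_unanimityGame (h : ShapleyAxioms ψ) {T : Finset α} (hT : T.Nonempty)
    (c : ℝ) (i : α) : ψ (c • unanimityGame T) i = if i ∈ T then c / #T else 0 := by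
  set w := c • unanimityGame T
  have hw : w ∅ = 0 := by simp [w, unanimityGame_empty hT]
  have hnull : ∀ j ∉ T, ψ w j = 0 := fun j hj => h.dummy w hw j fun S _ => by
    simp [w, unanimityGame, subset_insert_iff_of_notMem hj]
  split_ifs with hi
  · have hsymm : ∀ j ∈ T, ψ w j = ψ w i := fun j hj => h.symmetric w hw j i fun S hS => by
      obtain rfl | hji := eq_or_ne j i
      · rfl
      have hS' : j ∉ S ∧ i ∉ S := by simpa [subset_sdiff] using hS
      have hj' : ¬T ⊆ insert j S := fun hsub => by simpa [hji.symm, hS'.2] using hsub hi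
      have hi' : ¬T ⊆ insert i S := fun hsub => by simpa [hji, hS'.1] using hsub hj
      simp [w, unanimityGame, hj', hi']
    have hcard : (#T : ℝ) * ψ w i = c := calc
      (#T : ℝ) * ψ w i = ∑ j ∈ T, ψ w j := by rw [sum_congr rfl hsymm, sum_const, nsmul_eq_mul]
      _ = ∑ j, ψ w j := sum_subset (subset_univ T) fun j _ hj => hnull j hj
      _ = c := by simp [h.efficient w hw, w, unanimityGame]
    rw [← hcard, mul_div_cancel_left₀ _ (by exact_mod_cast hT.card_pos.ne')]
  · exact hnull i hi

theorem unique (h : ShapleyAxioms ψ) (h' : ShapleyAxioms ψ') (v : Finset α → ℝ) (hv : v ∅ = 0)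
    (i : α) : ψ v i = ψ' v i := by
  have hT : ∀ T ∈ univ.erase (∅ : Finset α), T.Nonempty := fun T hT =>
    nonempty_iff_ne_empty.2 (ne_of_mem_erase hT)
  have hgames : ∀ T ∈ univ.erase ∅, (harsanyiDividend v T • unanimityGame T) ∅ = 0 :=
    fun T hT' => by simp [unanimityGame_empty (hT T hT')]
  rw [← sum_harsanyiDividend_smul_unanimityGame v hv, h.apply_sum _ _ hgames,
    h'.apply_sum _ _ hgames]
  exact sum_congr rfl fun T hT' => by
    rw [h.apply_smul_unanimityGame (hT T hT'), h'.apply_smul_unanimityGame (hT T hT')]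

end ShapleyAxioms

section Shapley

variable {α : Type*} [Fintype α] [DecidableEq α]

theorem shapley_eq_sum (v : Finset α → ℝ) (i : α) :
    shapley v i = (Fintype.card α : ℝ)⁻¹ * ∑ T : Finset α,
      (if i ∈ T then ((Fintype.card α - 1).choose (#T - 1) : ℝ)⁻¹
        else -((Fintype.card α - 1).choose #T : ℝ)⁻¹) * v T := by
  have hsplit := sum_powerset_insert (notMem_erase i univ) fun T : Finset α =>
    (if i ∈ T then ((Fintype.card α - 1).choose (#T - 1) : ℝ)⁻¹
      else -((Fintype.card α - 1).choose #T : ℝ)⁻¹) * v T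
  rw [insert_erase (mem_univ i), powerset_univ] at hsplit
  rw [shapley, hsplit, ← sum_add_distrib, sdiff_singleton_eq_erase]
  congr 1
  refine sum_congr rfl fun S hS => ?_
  have hiS : i ∉ S := fun h => notMem_erase i univ (mem_powerset.1 hS h)
  simp [hiS, card_insert_of_notMem hiS]
  ring

theorem sum_shapley (v : Finset α → ℝ) : ∑ i, shapley v i = v univ - v ∅ := by
  simp_rw [shapley_eq_sum, ← mul_sum]
  rw [sum_comm]
  simp_rw [← sum_mul]
  have hcoeff : ∀ T : Finset α, (∑ i, if i ∈ T then ((Fintype.card α - 1).choose (#T - 1) : ℝ)⁻¹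
      else -((Fintype.card α - 1).choose #T : ℝ)⁻¹) =
        Fintype.card α * ((if T = univ then 1 else 0) - if T = ∅ then 1 else 0) := by
    intro T
    simp_rw [← card_eq_iff_eq_univ, ← card_eq_zero,
      ← Nat.mul_inv_choose_pred_sub_mul_inv_choose _ _ (card_le_univ T)]
    rw [sum_ite, sum_const, sum_const, filter_mem_eq_inter, univ_inter, filter_notMem_eq_sdiff,
      card_univ_sdiff]
    simp [sub_eq_add_neg]
  simp_rw [hcoeff, mul_assoc, ← mul_sum, sub_mul, sum_sub_distrib, ite_mul, one_mul, zero_mul,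
    sum_ite_eq', mem_univ, if_true]
  obtain hα | hα := isEmpty_or_nonempty α
  · simp [univ_eq_empty]
  · exact inv_mul_cancel_left₀ (by positivity) _

theorem shapley_map_perm (σ : Equiv.Perm α) (v : Finset α → ℝ) (i : α) :
    shapley (fun S => v (S.map σ.toEmbedding)) i = shapley v (σ i) := by
  unfold shapley
  congr 1
  refine sum_equiv σ.finsetCongr (fun S => ?_) fun S _ => ?_
  · simp [Equiv.finsetCongr_apply, subset_sdiff]
  · simp [Equiv.finsetCongr_apply, map_insert]

theorem apply_map_swap_of_symmetric {v : Finset α → ℝ} {i j : α}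
    (hv : ∀ S ⊆ univ \ {i, j}, v (insert i S) = v (insert j S)) (S : Finset α) :
    v (S.map (Equiv.swap i j).toEmbedding) = v S := by
  by_cases hij : i ∈ S ↔ j ∈ S
  · rw [map_swap_eq_self hij]
  obtain ⟨hi, hj⟩ | ⟨hj, hi⟩ : (i ∈ S ∧ j ∉ S) ∨ (j ∈ S ∧ i ∉ S) := by tauto
  · have hR : S.erase i ⊆ univ \ {i, j} := by simp [subset_sdiff, hj]
    rw [← insert_erase hi, map_insert, Equiv.coe_toEmbedding, Equiv.swap_apply_left,
      map_swap_eq_self (by simp [hj]), hv _ hR]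
  · have hR : S.erase j ⊆ univ \ {i, j} := by simp [subset_sdiff, hi]
    rw [← insert_erase hj, Equiv.swap_comm, map_insert, Equiv.coe_toEmbedding,
      Equiv.swap_apply_left, map_swap_eq_self (by simp [hi]), hv _ hR]

theorem shapley_eq_of_symmetric {v : Finset α → ℝ} {i j : α}
    (hv : ∀ S ⊆ univ \ {i, j}, v (insert i S) = v (insert j S)) : shapley v i = shapley v j := by
  rw [← Equiv.swap_apply_left i j, ← shapley_map_perm]
  simp_rw [apply_map_swap_of_symmetric hv]

theorem shapley_eq_zero_of_null {v : Finset α → ℝ} {i : α}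
    (hv : ∀ S ⊆ univ \ {i}, v (insert i S) = v S) : shapley v i = 0 := by
  rw [shapley, sum_eq_zero fun S hS => by rw [hv S (mem_powerset.1 hS), sub_self, mul_zero],
    mul_zero]

theorem shapley_add (v w : Finset α → ℝ) (i : α) :
    shapley (fun S => v S + w S) i = shapley v i + shapley w i := by
  simp only [shapley, ← mul_add, ← sum_add_distrib]
  congr 1
  exact sum_congr rfl fun S _ => by ring

theorem shapleyAxioms_shapley : ShapleyAxioms (shapley (α := α)) where
  efficient v hv := by rw [sum_shapley, hv, sub_zero]
  symmetric _ _ _ _ := shapley_eq_of_symmetric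
  dummy _ _ _ := shapley_eq_zero_of_null
  additive v w _ _ := shapley_add v w

end Shapley

theorem shapley_unique_general {α : Type*} [Fintype α] [DecidableEq α]
    (ψ : (Finset α → ℝ) → α → ℝ)
    (hEff : ∀ v : Finset α → ℝ, v ∅ = 0 → ∑ i : α, ψ v i = v Finset.univ)
    (hSym : ∀ v : Finset α → ℝ, v ∅ = 0 → ∀ i j : α,
      (∀ S ⊆ (Finset.univ \ ({i, j} : Finset α)),
        v (insert i S) = v (insert j S)) → ψ v i = ψ v j)
    (hDummy : ∀ v : Finset α → ℝ, v ∅ = 0 → ∀ i : α,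
      (∀ S ⊆ (Finset.univ \ ({i} : Finset α)), v (insert i S) = v S) → ψ v i = 0)
    (hAdd : ∀ v w : Finset α → ℝ, v ∅ = 0 → w ∅ = 0 → ∀ i : α,
      ψ (fun S => v S + w S) i = ψ v i + ψ w i) :
    ∀ v : Finset α → ℝ, v ∅ = 0 → ∀ i : α, ψ v i = shapley v i :=
  fun v hv i => ShapleyAxioms.unique ⟨hEff, hSym, hDummy, hAdd⟩ shapleyAxioms_shapley v hv i

/-- Uniqueness of the Shapley value: any allocation rule `ψ` (assigning payoffs to
every cooperative game with `v ∅ = 0`) satisfying Efficiency, Symmetry, Dummy and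
Additivity coincides with the Shapley value on every such game. -/
theorem shapley_unique {α : Type*} [Fintype α] [DecidableEq α] [Nonempty α]
    (ψ : (Finset α → ℝ) → α → ℝ)
    (hEff : ∀ v : Finset α → ℝ, v ∅ = 0 → ∑ i : α, ψ v i = v Finset.univ)
    (hSym : ∀ v : Finset α → ℝ, v ∅ = 0 → ∀ i j : α,
      (∀ S ⊆ (Finset.univ \ ({i, j} : Finset α)),
        v (insert i S) = v (insert j S)) → ψ v i = ψ v j)
    (hDummy : ∀ v : Finset α → ℝ, v ∅ = 0 → ∀ i : α,
      (∀ S ⊆ (Finset.univ \ ({i} : Finset α)), v (insert i S) = v S) → ψ v i = 0)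
    (hAdd : ∀ v w : Finset α → ℝ, v ∅ = 0 → w ∅ = 0 → ∀ i : α,
      ψ (fun S => v S + w S) i = ψ v i + ψ w i) :
    ∀ v : Finset α → ℝ, v ∅ = 0 → ∀ i : α, ψ v i = shapley v i :=
  shapley_unique_general ψ hEff hSym hDummy hAdd
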